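/- arXiv:1203.3029 — 4 statements merged into one kernel-verified Lean document; each statement's English description precedes it below -/
import Mathlib

section
/- For any non-commutative polynomial w in T(V) and any variables x, y, the non-commutative Hessian is symmetric: τ(∂²w/∂x∂y) = ∂²w/∂y∂x, where τ : T(V)⊗T(V) → T(V)⊗T(V) is the flip a⊗b ↦ b⊗a, provided w is taken modulo commutators (i.e., the identity holds when w is replaced by its cyclic sum, or equivalently as maps on Pot(V)). -/
open scoped TensorProduct BigOperators
noncomputable section

/-- The free associative algebra on `n` (degree-one) variables, realized as the
monoid algebra of the free monoid on `Fin n`. -/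
abbrev FA (k : Type*) [CommRing k] (n : ℕ) := MonoidAlgebra k (FreeMonoid (Fin n))

namespace FA

variable {k : Type*} [CommRing k] {n : ℕ}

/-- The monomial (word) `x_{p 0} x_{p 1} ⋯` associated to a list of indices. -/
def word (p : List (Fin n)) : FA k n := MonoidAlgebra.single (FreeMonoid.ofList p) 1

/-- The generator `x_i`. -/
def X (i : Fin n) : FA k n := word [i]

/-- Cyclic sum of a monomial: `c(a_1⋯a_r) = ∑_i a_i⋯a_r a_1⋯a_{i-1}`. -/
def cycWord (p : List (Fin n)) : FA k n :=
  ∑ i ∈ Finset.range p.length, word (p.rotate i)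

/-- Cyclic sum operator `c : T(V) → T(V)`, extended linearly from monomials. -/
def cyc (f : FA k n) : FA k n :=
  f.coeff.sum fun p a => a • cycWord (FreeMonoid.toList p)

/-- Cyclic derivative of a monomial: `∂_x(p) = ∑_{p = u x v} v u`. -/
def cycDerWord (x : Fin n) (p : List (Fin n)) : FA k n :=
  ∑ i ∈ Finset.range p.length,
    if p[i]? = some x then word (p.drop (i + 1) ++ p.take i) else 0

/-- Cyclic derivative `∂_x : T(V) → T(V)`, extended linearly from monomials. -/
def cycDer (x : Fin n) (f : FA k n) : FA k n :=
  f.coeff.sum fun p a => a • cycDerWord x (FreeMonoid.toList p)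

/-- Ordinary partial derivative of a monomial: `∂p/∂x = ∑_{p = u x v} u ⊗ v`. -/
def pderWord (x : Fin n) (p : List (Fin n)) : FA k n ⊗[k] FA k n :=
  ∑ i ∈ Finset.range p.length,
    if p[i]? = some x then (word (p.take i)) ⊗ₜ[k] (word (p.drop (i + 1))) else 0

/-- Ordinary partial derivative `∂/∂x : T(V) → T(V) ⊗ T(V)`, extended linearly. -/
def pder (x : Fin n) (f : FA k n) : FA k n ⊗[k] FA k n :=
  f.coeff.sum fun p a => a • pderWord x (FreeMonoid.toList p)

/-- `f` is homogeneous of degree `r`: every monomial in its support is a word of length `r`. -/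
def IsHomog (r : ℕ) (f : FA k n) : Prop :=
  ∀ p ∈ f.coeff.support, (FreeMonoid.toList p).length = r

end FA


/-! Write `w = a_0 ⋯ a_{r-1}`. Differentiating first cyclically at a position `i` with `a_i = y`
and then at a position `j ≠ i` with `a_j = x` cuts the cyclic word at `i` and `j`, producing
`s(i, j) ⊗ s(j, i)`, where `s(a, b)` (`List.cyclicSeg`) is the cyclic segment strictly between
positions `a` and `b`. So `∂²w/∂x∂y` is a sum over ordered pairs `(i, j)`, and the flip `τ`
matches the term of `(i, j)` with the term of `(j, i)` in `∂²w/∂y∂x`. -/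

namespace List

variable {α : Type*}

def cyclicSeg (p : List α) (a b : ℕ) : List α :=
  if a < b then (p.take b).drop (a + 1) else p.drop (a + 1) ++ p.take b

/-- For `i < r` and `m < r - 1` this is `(i + 1 + m) % r`. -/
def rotIndex (r i m : ℕ) : ℕ :=
  if m < r - (i + 1) then i + 1 + m else m - (r - (i + 1))

theorem sum_range_rotIndex {M : Type*} [AddCommMonoid M] {r i : ℕ} (hi : i < r) (f : ℕ → M) :
    ∑ m ∈ Finset.range (r - 1), f (rotIndex r i m) =
      ∑ j ∈ (Finset.range r).erase i, f j := by
  refine Finset.sum_nbij' (rotIndex r i) (fun j => if i < j then j - i - 1 else j + (r - (i + 1)))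
    ?_ ?_ ?_ ?_ fun _ _ => rfl <;>
  · intro _ h
    simp only [rotIndex, Finset.mem_range, Finset.mem_erase] at *
    split_ifs <;> omega

variable {p : List α} {i m : ℕ}

theorem length_drop_succ_append_take (hi : i < p.length) :
    (p.drop (i + 1) ++ p.take i).length = p.length - 1 := by
  simp only [length_append, length_drop, length_take]
  omega

theorem getElem?_drop_succ_append_take (hm : m < p.length - 1) :
    (p.drop (i + 1) ++ p.take i)[m]? = p[rotIndex p.length i m]? := by
  rw [getElem?_append, length_drop, rotIndex]
  split_ifs
  · rw [getElem?_drop]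
  · rw [getElem?_take, if_pos (by omega)]

theorem take_drop_succ_append_take (hm : m < p.length - 1) :
    (p.drop (i + 1) ++ p.take i).take m = p.cyclicSeg i (rotIndex p.length i m) := by
  rw [rotIndex]
  split_ifs
  · rw [cyclicSeg, if_pos (by omega), take_append, length_drop, Nat.sub_eq_zero_of_le (by omega),
      take_zero, append_nil, drop_take]
    congr 1
    omega
  · rw [cyclicSeg, if_neg (by omega), take_append, length_drop,
      take_of_length_le (by rw [length_drop]; omega), take_take, min_eq_left (by omega)]

theorem drop_drop_succ_append_take (hm : m < p.length - 1) :
    (p.drop (i + 1) ++ p.take i).drop (m + 1) = p.cyclicSeg (rotIndex p.length i m) i := by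
  rw [rotIndex]
  split_ifs
  · rw [cyclicSeg, if_neg (by omega), drop_append, length_drop, Nat.sub_eq_zero_of_le (by omega),
      drop_zero, drop_drop]
    congr 2
  · rw [cyclicSeg, if_pos (by omega), drop_append, length_drop,
      drop_of_length_le (by rw [length_drop]; omega), nil_append]
    congr 1
    omega

end List

namespace FA

open List

variable {k : Type*} [CommRing k] {n : ℕ}

section linearExtend

variable {M : Type*} [AddCommMonoid M] [Module k M]

def linearExtend (f : List (Fin n) → M) : FA k n →ₗ[k] M :=
  Finsupp.linearCombination k (fun p => f (FreeMonoid.toList p)) ∘ₗ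
    (MonoidAlgebra.coeffLinearEquiv k).toLinearMap

theorem linearExtend_apply (f : List (Fin n) → M) (g : FA k n) :
    linearExtend f g = g.coeff.sum fun p a => a • f (FreeMonoid.toList p) :=
  Finsupp.linearCombination_apply k g.coeff

theorem linearExtend_word (f : List (Fin n) → M) (q : List (Fin n)) :
    linearExtend f (word q : FA k n) = f q := by
  simp [linearExtend_apply, word]

theorem linearMap_ext_word {f g : FA k n →ₗ[k] M} (h : ∀ q, f (word q) = g (word q)) :
    f = g :=
  MonoidAlgebra.lhom_ext' fun a => LinearMap.ext_ring (h (FreeMonoid.toList a))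

end linearExtend

theorem pder_eq_linearExtend (x : Fin n) : pder (k := k) x = linearExtend (pderWord x) :=
  funext fun f => (linearExtend_apply _ f).symm

theorem cycDer_eq_linearExtend (x : Fin n) : cycDer (k := k) x = linearExtend (cycDerWord x) :=
  funext fun f => (linearExtend_apply _ f).symm

theorem pderWord_drop_succ_append_take (x : Fin n) {p : List (Fin n)} {i : ℕ}
    (hi : i < p.length) :
    (pderWord x (p.drop (i + 1) ++ p.take i) : FA k n ⊗[k] FA k n) =
      ∑ j ∈ (Finset.range p.length).erase i,
        if p[j]? = some x then word (p.cyclicSeg i j) ⊗ₜ[k] word (p.cyclicSeg j i) else 0 := by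
  rw [pderWord, length_drop_succ_append_take hi, ← sum_range_rotIndex hi]
  refine Finset.sum_congr rfl fun m hm => ?_
  rw [Finset.mem_range] at hm
  rw [getElem?_drop_succ_append_take hm, take_drop_succ_append_take hm,
    drop_drop_succ_append_take hm]

theorem pder_cycDerWord (x y : Fin n) (p : List (Fin n)) :
    pder x (cycDerWord y p : FA k n) =
      ∑ i ∈ Finset.range p.length, ∑ j ∈ Finset.range p.length,
        if j ≠ i ∧ p[i]? = some y ∧ p[j]? = some x then
          word (p.cyclicSeg i j) ⊗ₜ[k] word (p.cyclicSeg j i) else 0 := by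
  rw [cycDerWord, pder_eq_linearExtend, map_sum]
  refine Finset.sum_congr rfl fun i hi => ?_
  rw [Finset.mem_range] at hi
  split_ifs with hy
  · rw [linearExtend_word, pderWord_drop_succ_append_take x hi, ← Finset.filter_ne',
      Finset.sum_filter]
    simp only [hy, true_and, ite_and]
  · simp [hy]

theorem comm_pder_cycDerWord (x y : Fin n) (p : List (Fin n)) :
    TensorProduct.comm k (FA k n) (FA k n) (pder x (cycDerWord y p)) =
      pder y (cycDerWord x p) := by
  rw [pder_cycDerWord, pder_cycDerWord, Finset.sum_comm]
  simp only [map_sum, apply_ite (TensorProduct.comm k (FA k n) (FA k n)), map_zero,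
    TensorProduct.comm_tmul]
  exact Finset.sum_congr rfl fun i _ => Finset.sum_congr rfl fun j _ =>
    if_congr (by rw [ne_comm]; tauto) rfl rfl

end FA

theorem hessian_symm_general {k : Type*} [Field k] (n : ℕ)
    (w : FA k n) (x y : Fin n) :
    (TensorProduct.comm k (FA k n) (FA k n)) (FA.pder x (FA.cycDer y w)) =
      FA.pder y (FA.cycDer x w) := by
  have h : (TensorProduct.comm k (FA k n) (FA k n)).toLinearMap ∘ₗ
      FA.linearExtend (FA.pderWord x) ∘ₗ FA.linearExtend (FA.cycDerWord y) =
      FA.linearExtend (FA.pderWord y) ∘ₗ FA.linearExtend (FA.cycDerWord x) :=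
    FA.linearMap_ext_word fun q => by
      simpa only [LinearMap.comp_apply, LinearEquiv.coe_coe, FA.linearExtend_word,
        ← FA.pder_eq_linearExtend] using FA.comm_pder_cycDerWord x y q
  rw [FA.pder_eq_linearExtend, FA.pder_eq_linearExtend, FA.cycDer_eq_linearExtend,
    FA.cycDer_eq_linearExtend]
  exact LinearMap.congr_fun h w

/-- Symmetry of the non-commutative Hessian:
`τ(∂²w/∂x∂y) = ∂²w/∂y∂x`, where `∂²w/∂x∂y = (∂/∂x) ∘ ∂_y` involves the cyclic
derivative first (so that the identity holds for every representative `w` of a potential),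
and `τ` is the flip of the two tensor factors. -/
theorem hessian_symm {k : Type*} [Field k] [CharZero k] (n : ℕ)
    (w : FA k n) (x y : Fin n) :
    (TensorProduct.comm k (FA k n) (FA k n)) (FA.pder x (FA.cycDer y w)) =
      FA.pder y (FA.cycDer x w) :=
  hessian_symm_general n w x y
end
end

section
/- The cyclic sum map c : T(V) → T(V) vanishes on the commutator subspace [T(V), T(V)], hence induces a well-defined linear map c̃ : T(V)/[T(V),T(V)] → T(V). Moreover, over a field of characteristic zero, c̃ is injective, i.e., c(w) = 0 for a homogeneous element w of degree r ≥ 1 implies w ∈ [T(V),T(V)]. -/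
open scoped TensorProduct BigOperators
noncomputable section

/-!
Rotating a word `uv ↦ vu` changes it by the commutator `uv - vu`, and `c` only depends on the
rotation class of a word. Hence `c(ab) = c(ba)`, and for a word `w` of length `r` the difference
`r • w - c(w) = ∑ᵢ (w - rotᵢ w)` is a sum of commutators. If `w` is homogeneous of degree
`r ≥ 1` with `c(w) = 0`, then `r • w` is a sum of commutators, and `r` is invertible in `k`.
-/

open Finset in
theorem Finset.sum_range_succ_comp_eq_of_eq {M : Type*} [AddCommMonoid M] [IsRightCancelAdd M]
    (f : ℕ → M) (m : ℕ) (h : f m = f 0) :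
    ∑ i ∈ range m, f (i + 1) = ∑ i ∈ range m, f i := by
  apply add_right_cancel (b := f 0)
  rw [← sum_range_succ', sum_range_succ, h]

def commutatorSpan (k A : Type*) [CommSemiring k] [Ring A] [Module k A] : Submodule k A :=
  Submodule.span k {x | ∃ a b : A, x = a * b - b * a}

theorem mul_sub_mul_mem_commutatorSpan {k A : Type*} [CommSemiring k] [Ring A] [Module k A]
    (a b : A) : a * b - b * a ∈ commutatorSpan k A :=
  Submodule.subset_span ⟨a, b, rfl⟩

namespace FA

variable {k : Type*} [CommRing k] {n : ℕ}

theorem word_append (p q : List (Fin n)) : (word (p ++ q) : FA k n) = word p * word q := by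
  simp [word, MonoidAlgebra.single_mul_single, FreeMonoid.ofList_append]

theorem single_eq_smul_word (p : FreeMonoid (Fin n)) (a : k) :
    MonoidAlgebra.single p a = a • (word p.toList : FA k n) := by
  rw [word, FreeMonoid.ofList_toList, MonoidAlgebra.smul_single', mul_one]

theorem sum_coeff_smul_word (f : FA k n) : (f.coeff.sum fun p a => a • word p.toList) = f := by
  simp_rw [← single_eq_smul_word]
  exact MonoidAlgebra.sum_coeff_single f

theorem cyc_eq_linearCombination (f : FA k n) :
    cyc f = Finsupp.linearCombination k (fun p : FreeMonoid (Fin n) => cycWord p.toList) f.coeff :=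
  (Finsupp.linearCombination_apply k _).symm

theorem cyc_add (f g : FA k n) : cyc (f + g) = cyc f + cyc g := by
  simp only [cyc_eq_linearCombination, MonoidAlgebra.coeff_add, map_add]

theorem cyc_sub (f g : FA k n) : cyc (f - g) = cyc f - cyc g := by
  simp only [cyc_eq_linearCombination, MonoidAlgebra.coeff_sub, map_sub]

theorem cyc_single (p : FreeMonoid (Fin n)) (a : k) :
    cyc (MonoidAlgebra.single p a : FA k n) = a • cycWord p.toList := by
  simp [cyc_eq_linearCombination, MonoidAlgebra.coeff_single]

theorem cycWord_rotate_one (q : List (Fin n)) : (cycWord (q.rotate 1) : FA k n) = cycWord q := by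
  simp only [cycWord, List.length_rotate, List.rotate_rotate, add_comm 1]
  exact Finset.sum_range_succ_comp_eq_of_eq (fun i => word (q.rotate i)) _
    (by simp only [List.rotate_length, List.rotate_zero])

theorem cycWord_rotate (q : List (Fin n)) (j : ℕ) :
    (cycWord (q.rotate j) : FA k n) = cycWord q := by
  induction j with
  | zero => rw [List.rotate_zero]
  | succ j ih => rw [← List.rotate_rotate, cycWord_rotate_one, ih]

theorem cycWord_append_comm (u v : List (Fin n)) :
    (cycWord (u ++ v) : FA k n) = cycWord (v ++ u) := by
  rw [← List.rotate_append_length_eq u v, cycWord_rotate]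

theorem cyc_mul_comm (a b : FA k n) : cyc (a * b) = cyc (b * a) := by
  induction a using MonoidAlgebra.induction_linear with
  | zero => simp
  | add f g hf hg => rw [add_mul, mul_add, cyc_add, cyc_add, hf, hg]
  | single u α =>
    induction b using MonoidAlgebra.induction_linear with
    | zero => simp
    | add f g hf hg => rw [add_mul, mul_add, cyc_add, cyc_add, hf, hg]
    | single v β =>
      simp only [MonoidAlgebra.single_mul_single, cyc_single, FreeMonoid.toList_mul,
        cycWord_append_comm u.toList, mul_comm α]

theorem word_sub_word_rotate_mem_commutatorSpan (q : List (Fin n)) (i : ℕ) :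
    (word q : FA k n) - word (q.rotate i) ∈ commutatorSpan k (FA k n) := by
  rw [List.rotate_eq_drop_append_take_mod]
  nth_rw 1 [← List.take_append_drop (i % q.length) q]
  rw [word_append, word_append]
  exact mul_sub_mul_mem_commutatorSpan _ _

theorem length_nsmul_word_sub_cycWord_mem_commutatorSpan (q : List (Fin n)) :
    (q.length • word q : FA k n) - cycWord q ∈ commutatorSpan k (FA k n) := by
  simpa [cycWord, Finset.sum_sub_distrib] using
    Submodule.sum_mem _ fun i (_ : i ∈ Finset.range q.length) =>
      word_sub_word_rotate_mem_commutatorSpan (k := k) q i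

theorem nsmul_sub_cyc_mem_commutatorSpan {r : ℕ} {w : FA k n} (hw : IsHomog r w) :
    r • w - cyc w ∈ commutatorSpan k (FA k n) := by
  have hsum : r • w - cyc w =
      w.coeff.sum fun p a => a • (r • word p.toList - cycWord p.toList) := by
    nth_rw 1 [← sum_coeff_smul_word w]
    simp only [cyc, Finsupp.smul_sum, smul_sub, smul_comm r]
    exact Finsupp.sum_sub.symm
  rw [hsum]
  refine Submodule.sum_mem _ fun p hp => Submodule.smul_mem _ _ ?_
  rw [← hw p hp]
  exact length_nsmul_word_sub_cycWord_mem_commutatorSpan _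

end FA

/-- The cyclic sum `c` vanishes on commutators (hence induces a map on
`Pot(V) = T(V)/[T(V),T(V)]`), and over a characteristic-zero field the induced map is
injective: if `c(w) = 0` for `w` homogeneous of degree `r ≥ 1`, then `w` lies in the
linear span of commutators. -/
theorem cyc_vanishes_on_commutators_and_injective {k : Type*} [Field k] [CharZero k]
    (n : ℕ) :
    (∀ a b : FA k n, FA.cyc (a * b - b * a) = 0) ∧
    (∀ r : ℕ, 1 ≤ r → ∀ w : FA k n, FA.IsHomog r w → FA.cyc w = 0 →
      w ∈ Submodule.span k {x : FA k n | ∃ a b : FA k n, x = a * b - b * a}) := by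
  refine ⟨fun a b => by rw [FA.cyc_sub, FA.cyc_mul_comm, sub_self], fun r hr w hw hcyc => ?_⟩
  have hrw : (r : k) • w ∈ commutatorSpan k (FA k n) := by
    simpa [hcyc, Nat.cast_smul_eq_nsmul] using FA.nsmul_sub_cyc_mem_commutatorSpan hw
  exact (Submodule.smul_mem_iff _ (Nat.cast_ne_zero.mpr (by omega))).mp hrw
end
end

section
/- Let w be a homogeneous potential of degree N+1 (with zero constant term), let R ⊆ V^{⊗N} be the span of the cyclic derivatives ∂_{x_1}(w),…,∂_{x_n}(w), and let R_{N+1} = (R⊗V) ∩ (V⊗R) ⊆ V^{⊗(N+1)}. Then c(w) ∈ R_{N+1}. -/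
open scoped TensorProduct BigOperators
noncomputable section

/-
Splitting a word p at each occurrence of a letter x gives
∑ₓ ∂ₓ(p)·x = ∑ₓ x·∂ₓ(p) = c(p), since x·(v u) and (v u)·x are exactly the rotations of
p = u x v. By linearity c(w) = ∑ₓ ∂ₓ(w)·x = ∑ₓ x·∂ₓ(w), which lies both in R·V and in V·R.
-/

namespace List

variable {α : Type*}

theorem rotate_eq_getElem_cons_drop_append_take (l : List α) {i : ℕ} (hi : i < l.length) :
    l.rotate i = l[i] :: (l.drop (i + 1) ++ l.take i) := by
  rw [rotate_eq_drop_append_take hi.le, drop_eq_getElem_cons hi, cons_append]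

theorem rotate_succ_eq_drop_append_take_append_getElem (l : List α) {i : ℕ}
    (hi : i < l.length) : l.rotate (i + 1) = l.drop (i + 1) ++ l.take i ++ [l[i]] := by
  rw [← rotate_rotate, rotate_eq_getElem_cons_drop_append_take l hi, rotate_cons_succ,
    rotate_zero]

end List

namespace FA

variable {k : Type*} [CommRing k] {n : ℕ}

theorem word_mul_word (p q : List (Fin n)) : (word p * word q : FA k n) = word (p ++ q) := by
  simp only [word, MonoidAlgebra.single_mul_single, one_mul]
  rfl

theorem sum_ite_getElem?_eq_some {M : Type*} [AddCommMonoid M] (p : List (Fin n)) {i : ℕ}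
    (hi : i < p.length) (g : Fin n → M) :
    ∑ x : Fin n, (if p[i]? = some x then g x else 0) = g p[i] := by
  simp [List.getElem?_eq_getElem hi]

theorem sum_range_word_rotate_succ (p : List (Fin n)) :
    ∑ i ∈ Finset.range p.length, (word (p.rotate (i + 1)) : FA k n) = cycWord p := by
  have h := (Finset.sum_range_succ' (fun i => (word (p.rotate i) : FA k n)) p.length).symm
  rwa [Finset.sum_range_succ, List.rotate_length, List.rotate_zero, add_left_inj] at h

theorem sum_X_mul_cycDerWord (p : List (Fin n)) :
    ∑ x : Fin n, (X x * cycDerWord x p : FA k n) = cycWord p := by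
  simp_rw [cycDerWord, Finset.mul_sum, mul_ite, mul_zero]
  rw [Finset.sum_comm, cycWord]
  refine Finset.sum_congr rfl fun i hi => ?_
  have hi := Finset.mem_range.1 hi
  rw [sum_ite_getElem?_eq_some p hi, X, word_mul_word,
    List.rotate_eq_getElem_cons_drop_append_take p hi, List.singleton_append]

theorem sum_cycDerWord_mul_X (p : List (Fin n)) :
    ∑ x : Fin n, (cycDerWord x p * X x : FA k n) = cycWord p := by
  simp_rw [cycDerWord, Finset.sum_mul, ite_mul, zero_mul]
  rw [Finset.sum_comm, ← sum_range_word_rotate_succ]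
  refine Finset.sum_congr rfl fun i hi => ?_
  have hi := Finset.mem_range.1 hi
  rw [sum_ite_getElem?_eq_some p hi, X, word_mul_word,
    List.rotate_succ_eq_drop_append_take_append_getElem p hi]

theorem cyc_eq_sum_X_mul_cycDer (f : FA k n) : cyc f = ∑ x : Fin n, X x * cycDer x f := by
  simp_rw [cycDer, Finsupp.sum, Finset.mul_sum, mul_smul_comm]
  rw [Finset.sum_comm, cyc, Finsupp.sum]
  simp_rw [← Finset.smul_sum, sum_X_mul_cycDerWord]

theorem cyc_eq_sum_cycDer_mul_X (f : FA k n) : cyc f = ∑ x : Fin n, cycDer x f * X x := by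
  simp_rw [cycDer, Finsupp.sum, Finset.sum_mul, smul_mul_assoc]
  rw [Finset.sum_comm, cyc, Finsupp.sum]
  simp_rw [← Finset.smul_sum, sum_cycDerWord_mul_X]

end FA

theorem cyc_mem_R_inter_general {k : Type*} [Field k] (n : ℕ)
    (w : FA k n) :
    FA.cyc w ∈
      (Submodule.span k {y : FA k n |
          ∃ r ∈ Submodule.span k (Set.range fun i : Fin n => FA.cycDer i w),
            ∃ i : Fin n, y = r * FA.X i}) ⊓
      (Submodule.span k {y : FA k n |
          ∃ r ∈ Submodule.span k (Set.range fun i : Fin n => FA.cycDer i w),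
            ∃ i : Fin n, y = FA.X i * r}) := by
  have hR (i : Fin n) : FA.cycDer i w ∈ Submodule.span k (Set.range fun i => FA.cycDer i w) :=
    Submodule.subset_span ⟨i, rfl⟩
  constructor
  · rw [FA.cyc_eq_sum_cycDer_mul_X w]
    exact Submodule.sum_mem _ fun i _ => Submodule.subset_span ⟨_, hR i, i, rfl⟩
  · rw [FA.cyc_eq_sum_X_mul_cycDer w]
    exact Submodule.sum_mem _ fun i _ => Submodule.subset_span ⟨_, hR i, i, rfl⟩

/-- For a homogeneous potential `w` of degree `N+1`, with `R` the span of the cyclic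
derivatives and `R_{N+1} = (R⊗V) ∩ (V⊗R)` (realized inside the free algebra as the
intersection of the spans of `R·V` and `V·R`), one has `c(w) ∈ R_{N+1}`. -/
theorem cyc_mem_R_inter {k : Type*} [Field k] [CharZero k] (n N : ℕ) (hN : 2 ≤ N)
    (w : FA k n) (hw : FA.IsHomog (N + 1) w) :
    FA.cyc w ∈
      (Submodule.span k {y : FA k n |
          ∃ r ∈ Submodule.span k (Set.range fun i : Fin n => FA.cycDer i w),
            ∃ i : Fin n, y = r * FA.X i}) ⊓
      (Submodule.span k {y : FA k n |
          ∃ r ∈ Submodule.span k (Set.range fun i : Fin n => FA.cycDer i w),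
            ∃ i : Fin n, y = FA.X i * r}) :=
  cyc_mem_R_inter_general n w
end
end

section
/- Let u = ∑_{i,j} u_{ij} x_i x_j with (u_{ij}) invertible, and suppose Γ = k⟨x_1,…,x_n⟩/(u) carries a graded automorphism σ of degree 0 such that in the algebra A = k⟨x_1,…,x_n,z⟩/(∂_{x_i}(uz), ∂_z(uz)) one has z x_i = σ(x_i) z for all i, and z is not a zero-divisor in A. Then for each i, the element X_i = ∑_{j=1}^n (u_{ij} x_j + u_{ji} σ(x_j)) is zero in Γ. In particular σ = Id on V_Γ if and only if the matrix (u_{ij}) is skew-symmetric (i.e., u_{ij} = −u_{ji}), given that x_1,…,x_n are linearly independent in Γ_1. -/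
open scoped TensorProduct BigOperators
noncomputable section

/-! In `A` the relation `∂_{xᵢ}(uz)` reads `∑ⱼ (u_{ij} xⱼ z + u_{ji} z xⱼ) = 0`. Moving `z`
to the right with `z xⱼ = σ(xⱼ) z` gives `Xᵢ z = 0`, so `Xᵢ = 0` because `z` is not a right
zero-divisor and `Γ → A` is injective. If `σ = id` then `Xᵢ = ∑ⱼ (u_{ij} + u_{ji}) xⱼ`; if `U`
is skew then `Xᵢ = ∑ⱼ u_{ij} (xⱼ - σ xⱼ)`, and invertibility of `U` forces `σ xⱼ = xⱼ`. -/

namespace FA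

variable {k : Type*} [CommRing k] {n : ℕ}

def cycDerₗ (x : Fin n) : FA k n →ₗ[k] FA k n where
  toFun := cycDer x
  map_add' f g := map_add
    (Finsupp.linearCombination k fun p => cycDerWord x (FreeMonoid.toList p)) f.coeff g.coeff
  map_smul' a f := map_smul
    (Finsupp.linearCombination k fun p => cycDerWord x (FreeMonoid.toList p)) a f.coeff

@[simp]
lemma cycDerₗ_apply (x : Fin n) (f : FA k n) : cycDerₗ x f = cycDer x f := rfl

lemma word_mul (p q : List (Fin n)) : (word p : FA k n) * word q = word (p ++ q) := by
  simp [word, MonoidAlgebra.single_mul_single]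

lemma X_mul_X (i j : Fin n) : (X i * X j : FA k n) = word [i, j] :=
  word_mul [i] [j]

lemma cycDer_word (x : Fin n) (p : List (Fin n)) :
    cycDer x (word p : FA k n) = cycDerWord x p := by
  simp [cycDer, word, MonoidAlgebra.coeff_single]

lemma cycDerWord_triple (x a b c : Fin n) :
    (cycDerWord x [a, b, c] : FA k n) = (if a = x then word [b, c] else 0) +
      (if b = x then word [c, a] else 0) + (if c = x then word [a, b] else 0) := by
  simp [cycDerWord, Finset.sum_range_succ]

lemma cycDer_castSucc_quadric_mul_last (U : Matrix (Fin n) (Fin n) k) (i : Fin n) :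
    cycDer i.castSucc ((∑ p, ∑ q, U p q • (X p.castSucc * X q.castSucc)) * X (Fin.last n)) =
      ∑ q, U i q • (X q.castSucc * X (Fin.last n) : FA k (n + 1)) +
        ∑ q, U q i • (X (Fin.last n) * X q.castSucc) := by
  have hw : ((∑ p, ∑ q, U p q • (X p.castSucc * X q.castSucc)) * X (Fin.last n) :
      FA k (n + 1)) = ∑ p, ∑ q, U p q • word [p.castSucc, q.castSucc, Fin.last n] := by
    simp only [Finset.sum_mul, smul_mul_assoc, X, word_mul, List.cons_append, List.nil_append]
  have hlast (p : Fin n) : Fin.last n ≠ p.castSucc := (Fin.castSucc_lt_last p).ne'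
  rw [hw, ← cycDerₗ_apply]
  simp [map_sum, map_smul, cycDer_word, cycDerWord_triple, hlast, X_mul_X, Finset.sum_add_distrib]

end FA

section LinearAlgebra

variable {R M m : Type*} [CommRing R] [AddCommGroup M] [Module R M] [Fintype m] [DecidableEq m]

theorem Matrix.eq_zero_of_forall_sum_smul_eq_zero {U : Matrix m m R} (hU : IsUnit U.det)
    {v : m → M} (h : ∀ i, ∑ j, U i j • v j = 0) : v = 0 := by
  ext l
  calc v l = ∑ j, (U⁻¹ * U) l j • v j := by
        simp [Matrix.nonsing_inv_mul U hU, Matrix.one_apply, ite_smul]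
    _ = ∑ i, U⁻¹ l i • ∑ j, U i j • v j := by
        simp only [Matrix.mul_apply, Finset.sum_smul, Finset.smul_sum, mul_smul]
        exact Finset.sum_comm
    _ = 0 := by simp [h]

theorem forall_eq_iff_skew_of_sum_smul_add_smul_eq_zero {U : Matrix m m R}
    (hU : IsUnit U.det) {x y : m → M} (hx : LinearIndependent R x)
    (h : ∀ i, ∑ j, (U i j • x j + U j i • y j) = 0) :
    (∀ i, y i = x i) ↔ ∀ i j, U i j = -U j i := by
  constructor
  · intro hyx i j
    simp only [hyx, ← add_smul] at h
    exact eq_neg_of_add_eq_zero_left (Fintype.linearIndependent_iff.mp hx _ (h i) j)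
  · intro hskew i
    have hxy := Matrix.eq_zero_of_forall_sum_smul_eq_zero hU (v := fun j => x j - y j) fun i => by
      simpa [hskew _ i, smul_sub, sub_eq_add_neg] using h i
    exact (sub_eq_zero.mp (congrFun hxy i)).symm

end LinearAlgebra

theorem sum_smul_eq_zero_of_twisted_relation {R Γ A m : Type*} [CommSemiring R] [Semiring Γ]
    [Algebra R Γ] [Semiring A] [Algebra R A] [Fintype m] {ι : Γ →ₐ[R] A}
    (hι : Function.Injective ι) {z : A} (hz : ∀ a : A, a * z = 0 → a = 0) {c d : m → R}
    {x y : m → Γ} (hxy : ∀ j, z * ι (x j) = ι (y j) * z)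
    (hrel : ∑ j, (c j • (ι (x j) * z) + d j • (z * ι (x j))) = 0) :
    ∑ j, (c j • x j + d j • y j) = 0 := by
  refine hι ((hz _ ?_).trans (map_zero ι).symm)
  simpa [Finset.sum_mul, add_mul, smul_mul_assoc, hxy] using hrel

theorem sigma_skew_criterion_general {k : Type*} [Field k] (n : ℕ)
    (U : Matrix (Fin n) (Fin n) k) (hU : IsUnit U.det) :
    -- the quadratic element u in n variables and the potential w = u·z in n+1 variables
    let uΓ : FA k n := ∑ i, ∑ j, U i j • (FA.X i * FA.X j)
    let xA' : Fin n → FA k (n + 1) := fun i => FA.X i.castSucc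
    let zA' : FA k (n + 1) := FA.X (Fin.last n)
    let w : FA k (n + 1) := (∑ i, ∑ j, U i j • (xA' i * xA' j)) * zA'
    -- Γ : the quadric, A : the potential algebra, as quotients by two-sided ideals
    let Γ := RingQuot (fun a b : FA k n => a = uΓ ∧ b = 0)
    let A := RingQuot (fun a b : FA k (n + 1) =>
      (∃ i : Fin (n + 1), a = FA.cycDer i w) ∧ b = 0)
    let xΓ : Fin n → Γ := fun i =>
      RingQuot.mkAlgHom k (fun a b : FA k n => a = uΓ ∧ b = 0) (FA.X i)
    let xA : Fin n → A := fun i =>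
      RingQuot.mkAlgHom k (fun a b : FA k (n + 1) =>
        (∃ i : Fin (n + 1), a = FA.cycDer i w) ∧ b = 0) (xA' i)
    let zA : A := RingQuot.mkAlgHom k (fun a b : FA k (n + 1) =>
        (∃ i : Fin (n + 1), a = FA.cycDer i w) ∧ b = 0) zA'
    ∀ (ι : Γ →ₐ[k] A), Function.Injective ι → (∀ i, ι (xΓ i) = xA i) →
    ∀ (σ : Γ ≃ₐ[k] Γ), (∀ i, zA * xA i = ι (σ (xΓ i)) * zA) →
    (∀ a : A, a * zA = 0 → a = 0) →
    LinearIndependent k xΓ →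
    (∀ i, ∑ j, (U i j • xΓ j + U j i • σ (xΓ j)) = 0) ∧
    ((∀ i, σ (xΓ i) = xΓ i) ↔ ∀ i j, U i j = - U j i) := by
  intro uΓ xA' zA' w Γ A xΓ xA zA ι hι hιx σ hσ hz hx
  have hrel (i : Fin n) : ∑ j, (U i j • (xA j * zA) + U j i • (zA * xA j)) = 0 := by
    have h := RingQuot.mkAlgHom_rel k
      (s := fun a b : FA k (n + 1) => (∃ i : Fin (n + 1), a = FA.cycDer i w) ∧ b = 0)
      ⟨⟨i.castSucc, rfl⟩, rfl⟩
    rw [FA.cycDer_castSucc_quadric_mul_last, map_zero] at h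
    simpa [Finset.sum_add_distrib] using h
  have hX (i : Fin n) : ∑ j, (U i j • xΓ j + U j i • σ (xΓ j)) = 0 :=
    sum_smul_eq_zero_of_twisted_relation hι hz (fun j => by rw [hιx, hσ])
      (by simpa [hιx] using hrel i)
  exact ⟨hX, forall_eq_iff_skew_of_sum_smul_add_smul_eq_zero hU hx hX⟩

/-- Let `Γ = k⟨x₁,…,xₙ⟩/(u)` be the quadric defined by a non-degenerate quadratic element
`u = ∑ u_{ij} xᵢxⱼ`, and `A = k⟨x₁,…,xₙ,z⟩/(∂_{xᵢ}(uz), ∂_z(uz))` the associated potential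
algebra. Suppose `Γ` carries a (degree-0 graded) automorphism `σ` such that, under the
natural embedding `ι : Γ → A` (`ι(xᵢ) = xᵢ`), one has `z·xᵢ = ι(σ(xᵢ))·z` in `A` for all
`i`, and suppose `z` is not a (right) zero-divisor in `A`. Then
`Xᵢ = ∑ⱼ (u_{ij} xⱼ + u_{ji} σ(xⱼ)) = 0` in `Γ` for every `i`; in particular, given that
`x₁,…,xₙ` are linearly independent in `Γ₁`, `σ` is the identity on the generators if and
only if the matrix `(u_{ij})` is skew-symmetric. -/
theorem sigma_skew_criterion {k : Type*} [Field k] [CharZero k] (n : ℕ) (hn : 2 ≤ n)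
    (U : Matrix (Fin n) (Fin n) k) (hU : IsUnit U.det) :
    -- the quadratic element u in n variables and the potential w = u·z in n+1 variables
    let uΓ : FA k n := ∑ i, ∑ j, U i j • (FA.X i * FA.X j)
    let xA' : Fin n → FA k (n + 1) := fun i => FA.X i.castSucc
    let zA' : FA k (n + 1) := FA.X (Fin.last n)
    let w : FA k (n + 1) := (∑ i, ∑ j, U i j • (xA' i * xA' j)) * zA'
    -- Γ : the quadric, A : the potential algebra, as quotients by two-sided ideals
    let Γ := RingQuot (fun a b : FA k n => a = uΓ ∧ b = 0)
    let A := RingQuot (fun a b : FA k (n + 1) =>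
      (∃ i : Fin (n + 1), a = FA.cycDer i w) ∧ b = 0)
    let xΓ : Fin n → Γ := fun i =>
      RingQuot.mkAlgHom k (fun a b : FA k n => a = uΓ ∧ b = 0) (FA.X i)
    let xA : Fin n → A := fun i =>
      RingQuot.mkAlgHom k (fun a b : FA k (n + 1) =>
        (∃ i : Fin (n + 1), a = FA.cycDer i w) ∧ b = 0) (xA' i)
    let zA : A := RingQuot.mkAlgHom k (fun a b : FA k (n + 1) =>
        (∃ i : Fin (n + 1), a = FA.cycDer i w) ∧ b = 0) zA'
    ∀ (ι : Γ →ₐ[k] A), Function.Injective ι → (∀ i, ι (xΓ i) = xA i) →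
    ∀ (σ : Γ ≃ₐ[k] Γ), (∀ i, zA * xA i = ι (σ (xΓ i)) * zA) →
    (∀ a : A, a * zA = 0 → a = 0) →
    LinearIndependent k xΓ →
    (∀ i, ∑ j, (U i j • xΓ j + U j i • σ (xΓ j)) = 0) ∧
    ((∀ i, σ (xΓ i) = xΓ i) ↔ ∀ i j, U i j = - U j i) :=
  sigma_skew_criterion_general n U hU
end
end
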